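/- arXiv:1301.5004 — 9 statements merged into one kernel-verified Lean document; each statement's English description precedes it below -/
import Mathlib

section
/- If G and H are polynomials over a finite field F_q, the composition G∘H is an odd polynomial (all terms have odd degree), and the degree of G is coprime to q (the characteristic does not divide deg G, and deg G ≥ 1), then H(x) - H(0) is an odd polynomial. -/
/-!
Let `n = deg G` and `d = deg H`. The leading coefficient of `G ∘ H` sits in degree `nd`, so `nd`
is odd. Read `H` from the top through its reverse `H̃`: if the odd coefficients of `H̃` below an
odd `k < d` vanish, then near the top only the leading term of `G` contributes, and
`[x^(nd-k)] (G ∘ H) = lc G · n · (lc H)^(n-1) · [x^k] H̃`.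
The index `nd - k` is even, and `n ≠ 0` in `F` because the characteristic divides `q`, so
`[x^k] H̃ = [x^(d-k)] H = 0`. Strong induction on `k` kills every even coefficient of `H`
in degrees `1, …, d`.
-/

open Polynomial

namespace Polynomial

variable {R : Type*}

theorem coeff_mul_eq_of_odd_coeff_eq_zero [Semiring R] {p r : R[X]} {k : ℕ}
    (hp : ∀ j < k, Odd j → p.coeff j = 0) (hr : ∀ j < k, Odd j → r.coeff j = 0)
    {i : ℕ} (hi : Odd i) (hik : i ≤ k) :
    (p * r).coeff i = p.coeff 0 * r.coeff i + p.coeff i * r.coeff 0 := by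
  have hi0 : i ≠ 0 := by rintro rfl; exact Nat.not_odd_zero hi
  rw [coeff_mul, Finset.sum_eq_add (0, i) (i, 0) fun h => hi0 (congrArg Prod.snd h)]
  · rintro ⟨a, b⟩ hab ⟨ha, hb⟩
    rw [Finset.HasAntidiagonal.mem_antidiagonal] at hab
    have ha0 : a ≠ 0 := by rintro rfl; simp_all
    have hb0 : b ≠ 0 := by rintro rfl; simp_all
    rcases Nat.even_or_odd a with ha | ha
    · rw [hr b (by omega) (by rw [← hab] at hi; exact (Nat.odd_add'.mp hi).mpr ha), mul_zero]
    · rw [hp a (by omega) ha, zero_mul]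
  · simp
  · simp

theorem coeff_pow_eq_of_odd_coeff_eq_zero [CommSemiring R] {p : R[X]} {k : ℕ}
    (hp : ∀ j < k, Odd j → p.coeff j = 0) (m : ℕ) {i : ℕ} (hi : Odd i) (hik : i ≤ k) :
    (p ^ m).coeff i = m * p.coeff 0 ^ (m - 1) * p.coeff i := by
  induction m generalizing i with
  | zero =>
    have hi0 : i ≠ 0 := by rintro rfl; exact Nat.not_odd_zero hi
    simp [coeff_one, hi0]
  | succ m ih =>
    have hpm : ∀ j < k, Odd j → (p ^ m).coeff j = 0 := fun j hj hjo => by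
      rw [ih hjo hj.le, hp j hj hjo, mul_zero]
    have hpm0 : (p ^ m).coeff 0 = p.coeff 0 ^ m := by simp [coeff_zero_eq_eval_zero]
    rw [pow_succ, coeff_mul_eq_of_odd_coeff_eq_zero hpm hp hi hik, ih hi hik, hpm0]
    rcases m with _ | m
    · simp
    · push_cast
      ring

theorem coeff_comp_eq_leadingCoeff_mul_coeff_pow [CommSemiring R] (G H : R[X]) {j : ℕ}
    (hj : (G.natDegree - 1) * H.natDegree < j) :
    (G.comp H).coeff j = G.leadingCoeff * (H ^ G.natDegree).coeff j := by
  conv_lhs => rw [← eraseLead_add_monomial_natDegree_leadingCoeff G]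
  have hlow : (G.eraseLead.comp H).coeff j = 0 := by
    apply coeff_eq_zero_of_natDegree_lt
    calc _ ≤ G.eraseLead.natDegree * H.natDegree := natDegree_comp_le
      _ ≤ (G.natDegree - 1) * H.natDegree := Nat.mul_le_mul_right _ (eraseLead_natDegree_le G)
      _ < j := hj
  rw [add_comp, coeff_add, hlow, monomial_comp, coeff_C_mul, zero_add]

theorem reverse_pow [Semiring R] [NoZeroDivisors R] (p : R[X]) (n : ℕ) :
    (p ^ n).reverse = p.reverse ^ n := by
  induction n with
  | zero => simpa using reverse_C (1 : R)
  | succ n ih => rw [pow_succ, reverse_mul_of_domain, ih, pow_succ]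

theorem coeff_pow_sub_eq_coeff_reverse_pow [Semiring R] [NoZeroDivisors R] (p : R[X]) (n : ℕ)
    {k : ℕ} (hk : k ≤ n * p.natDegree) :
    (p ^ n).coeff (n * p.natDegree - k) = (p.reverse ^ n).coeff k := by
  rw [← reverse_pow, coeff_reverse, natDegree_pow, revAt_le hk]

theorem odd_natDegree_of_coeff_eq_zero_of_even [Semiring R] {p : R[X]} (hp : p ≠ 0)
    (h : ∀ n, Even n → p.coeff n = 0) : Odd p.natDegree := by
  refine Nat.not_even_iff_odd.mp fun he => ?_
  exact leadingCoeff_ne_zero.mpr hp (h _ he)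

variable [CommSemiring R] [NoZeroDivisors R] {G H : R[X]}

theorem odd_natDegree_mul_of_comp_odd (hodd : ∀ n, Even n → (G.comp H).coeff n = 0)
    (hG : G ≠ 0) (hH : H.natDegree ≠ 0) : Odd (G.natDegree * H.natDegree) := by
  have hcomp : G.comp H ≠ 0 := by
    rw [← leadingCoeff_ne_zero, leadingCoeff_comp hH]
    exact mul_ne_zero (leadingCoeff_ne_zero.mpr hG)
      (pow_ne_zero _ (leadingCoeff_ne_zero.mpr (ne_zero_of_natDegree_gt (Nat.pos_of_ne_zero hH))))
  rw [← natDegree_comp]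
  exact odd_natDegree_of_coeff_eq_zero_of_even hcomp hodd

theorem coeff_reverse_eq_zero_of_comp_odd (hodd : ∀ n, Even n → (G.comp H).coeff n = 0)
    (hG : (G.natDegree : R) ≠ 0) : ∀ k < H.natDegree, Odd k → H.reverse.coeff k = 0 := by
  intro k
  induction k using Nat.strong_induction_on with
  | _ k ih =>
    intro hkd hk
    have hG0 : G ≠ 0 := by rintro rfl; simp at hG
    have hH0 : H ≠ 0 := by rintro rfl; simp at hkd
    have hn : G.natDegree ≠ 0 := by rintro h; simp [h] at hG
    have hnd := odd_natDegree_mul_of_comp_odd hodd hG0 (Nat.ne_zero_of_lt hkd)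
    have hlow : ∀ j < k, Odd j → H.reverse.coeff j = 0 := fun j hj => ih j hj (hj.trans hkd)
    have hdle : H.natDegree ≤ G.natDegree * H.natDegree := Nat.le_mul_of_pos_left _ (by omega)
    have hsub : (G.natDegree - 1) * H.natDegree = G.natDegree * H.natDegree - H.natDegree :=
      Nat.sub_one_mul _ _
    have hcoeff : (G.comp H).coeff (G.natDegree * H.natDegree - k) =
        G.leadingCoeff *
          (G.natDegree * H.leadingCoeff ^ (G.natDegree - 1) * H.reverse.coeff k) := by
      rw [coeff_comp_eq_leadingCoeff_mul_coeff_pow, coeff_pow_sub_eq_coeff_reverse_pow,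
        coeff_pow_eq_of_odd_coeff_eq_zero hlow _ hk le_rfl, coeff_zero_reverse]
      all_goals omega
    rw [hodd _ (Nat.Odd.sub_odd hnd hk)] at hcoeff
    simpa [hG, hG0, pow_ne_zero _ (leadingCoeff_ne_zero.mpr hH0)] using hcoeff.symm

theorem coeff_eq_zero_of_comp_odd (hodd : ∀ n, Even n → (G.comp H).coeff n = 0)
    (hG : (G.natDegree : R) ≠ 0) {m : ℕ} (hm : Even m) (hm0 : m ≠ 0) : H.coeff m = 0 := by
  rcases lt_or_ge H.natDegree m with hlt | hle
  · exact coeff_eq_zero_of_natDegree_lt hlt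
  have hG0 : G ≠ 0 := by rintro rfl; simp at hG
  have hd : Odd H.natDegree :=
    (Nat.odd_mul.mp (odd_natDegree_mul_of_comp_odd hodd hG0 (by omega))).2
  have := coeff_reverse_eq_zero_of_comp_odd hodd hG (H.natDegree - m) (by omega)
    (Nat.Odd.sub_even hle hd hm)
  rwa [coeff_reverse, revAt_le (Nat.sub_le _ _), Nat.sub_sub_self hle] at this

end Polynomial

theorem FiniteField.natCast_ne_zero_of_coprime_card {F : Type*} [Field F] [Fintype F] {n : ℕ}
    (hn : n.Coprime (Fintype.card F)) : (n : F) ≠ 0 := by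
  intro h
  refine CharP.ringChar_ne_one (R := F) (Nat.eq_one_of_dvd_coprimes hn ?_ ?_)
  · exact (ringChar.spec F n).mp h
  · exact (ringChar.spec F _).mp (FiniteField.cast_card_eq_zero F)

theorem stmt_0_general (q : ℕ) (F : Type*) [Field F] [Fintype F] (hq : Fintype.card F = q)
    (G H : Polynomial F)
    (hodd : ∀ n : ℕ, Even n → (G.comp H).coeff n = 0)
    (hcop : Nat.Coprime G.natDegree q) :
    ∀ n : ℕ, Even n → (H - Polynomial.C (H.coeff 0)).coeff n = 0 := by
  intro m hm
  rcases eq_or_ne m 0 with rfl | hm0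
  · simp
  rw [coeff_sub, coeff_C, if_neg hm0, sub_zero]
  exact coeff_eq_zero_of_comp_odd hodd
    (FiniteField.natCast_ne_zero_of_coprime_card (hq ▸ hcop)) hm hm0

/-- If `G ∘ H` is an odd polynomial over the finite field `F` with `q` elements,
and `deg G` is coprime to `q` (with `deg G ≥ 1`), then `H(x) - H(0)` is odd. -/
theorem stmt_0 (q : ℕ) (F : Type*) [Field F] [Fintype F] (hq : Fintype.card F = q)
    (G H : Polynomial F)
    (hodd : ∀ n : ℕ, Even n → (G.comp H).coeff n = 0)
    (hcop : Nat.Coprime G.natDegree q) (hdeg : 1 ≤ G.natDegree) :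
    ∀ n : ℕ, Even n → (H - Polynomial.C (H.coeff 0)).coeff n = 0 :=
  stmt_0_general q F hq G H hodd hcop
end

section
/- Let p be a prime and t a positive integer with t > 2. If c ↦ c^t is a planar function on F_{p^r} for some r, then p is odd and t is even. -/
/-- If `t > 2` and `c ↦ c^t` is a planar function on a field with `p^r` elements,
then `p` is odd and `t` is even. -/
theorem stmt_5 (p t r : ℕ) (hp : p.Prime) (ht : 2 < t) (hr : 0 < r)
    (F : Type*) [Field F] [Fintype F] (hcard : Fintype.card F = p ^ r)
    (hplanar : ∀ a : F, a ≠ 0 → Function.Bijective (fun c : F => (c + a) ^ t - c ^ t)) :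
    Odd p ∧ Even t := by
  have hbij := hplanar 1 one_ne_zero
  have hinj := hbij.injective
  have hpF : ((p : F)) = 0 := by
    have h := FiniteField.cast_card_eq_zero F
    rw [hcard] at h
    push_cast at h
    exact pow_eq_zero_iff hr.ne' |>.mp h
  constructor
  · rcases hp.eq_two_or_odd' with h2 | hodd
    · exfalso
      subst h2
      have h2F : (2 : F) = 0 := by exact_mod_cast hpF
      have : (fun c : F => (c + 1) ^ t - c ^ t) 0 = (fun c : F => (c + 1) ^ t - c ^ t) 1 := by
        simp only [zero_add, one_pow, zero_pow (by omega : t ≠ 0)]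
        rw [show (1 : F) + 1 = 0 from by linear_combination h2F,
          zero_pow (by omega : t ≠ 0)]
        linear_combination h2F
      exact one_ne_zero (hinj this).symm
    · exact hodd
  · by_contra hte
    have htodd : Odd t := Nat.odd_iff.mpr (Nat.not_even_iff.mp hte)
    have : (fun c : F => (c + 1) ^ t - c ^ t) 0 = (fun c : F => (c + 1) ^ t - c ^ t) (-1) := by
      simp [zero_pow (by omega : t ≠ 0), htodd.neg_one_pow]
    have h01 := hinj this
    exact one_ne_zero (by linear_combination h01 : (1:F) = 0)
end

section
/- Let p be an odd prime, t an even positive integer, and c ∈ F_p. In the Laurent polynomial B(x) = (1/2)((x + x⁻¹ + c)^t - (x + x⁻¹ - c)^t) over F_p, the coefficient of x^{t-3} equals t·c·(t-1) + C(t,3)·c³, where C(t,3) is the binomial coefficient reduced mod p. -/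
/-!
Writing `y = x⁻¹`, we have `x + x⁻¹ + c = x · (1 + y (y + c))`, so the coefficient of `x^(t-3)`
in `(x + x⁻¹ + c)^t` is the coefficient of `y³` in `(1 + y (y + c))^t`. By the binomial theorem
only the terms `y² (y + c)²` and `y³ (y + c)³` contribute, giving `2·C(t,2)·c + C(t,3)·c³`.
This is odd in `c`, so the half-difference defining `B` has the same coefficient.
-/

open LaurentPolynomial Polynomial

theorem Nat.two_mul_cast_choose_two {R : Type*} [Ring R] (t : ℕ) :
    2 * (t.choose 2 : R) = t * (t - 1) := by
  cases t with
  | zero => simp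
  | succ s =>
    have h : (s + 1) * s = 2 * (s + 1).choose 2 := by
      simpa [mul_comm] using Nat.add_one_mul_choose_eq s 1
    rw [← Nat.cast_ofNat, ← Nat.cast_mul, ← h]
    push_cast
    rw [add_sub_cancel_right]

theorem Polynomial.coeff_one_add_C_mul_X_add_X_sq_pow_three {R : Type*} [CommRing R]
    (c : R) (t : ℕ) :
    ((1 + C c * X + X ^ 2) ^ t).coeff 3 = t * c * (t - 1) + t.choose 3 * c ^ 3 := by
  let g (k : ℕ) : R := t.choose k * if k ≤ 3 then c ^ (k - (3 - k)) * k.choose (3 - k) else 0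
  have hexpand : ((1 + C c * X + X ^ 2) ^ t).coeff 3 = ∑ k ∈ Finset.range (t + 1), g k := by
    rw [show (1 + C c * X + X ^ 2 : R[X]) = X * (X + C c) + 1 by ring, add_pow, finsetSum_coeff]
    refine Finset.sum_congr rfl fun k _ ↦ ?_
    simp only [g]
    rw [one_pow, mul_one, coeff_mul_natCast, mul_pow, coeff_X_pow_mul', mul_comm]
    split_ifs <;> simp [coeff_X_add_C_pow]
  have hlarge : ∑ k ∈ Finset.range (t + 1), g k = ∑ k ∈ Finset.range (t + 4), g k := by
    refine Finset.sum_subset (Finset.range_subset_range.2 (by omega)) fun k _ hk ↦ ?_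
    simp only [g, Nat.choose_eq_zero_of_lt (by simpa using hk), Nat.cast_zero, zero_mul]
  have hsmall : ∑ k ∈ Finset.range 4, g k = ∑ k ∈ Finset.range (t + 4), g k := by
    refine Finset.sum_subset (Finset.range_subset_range.2 (by omega)) fun k _ hk ↦ ?_
    simp only [g, if_neg (show ¬ k ≤ 3 by simp at hk; omega), mul_zero]
  calc ((1 + C c * X + X ^ 2) ^ t).coeff 3 = ∑ k ∈ Finset.range 4, g k := by
        rw [hexpand, hlarge, hsmall]
    _ = t.choose 2 * (c * 2) + t.choose 3 * c ^ 3 := by simp [Finset.sum_range_succ, g]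
    _ = t * c * (t - 1) + t.choose 3 * c ^ 3 := by
        linear_combination c * Nat.two_mul_cast_choose_two (R := R) t

theorem Polynomial.coeff_toLaurent_natCast {R : Type*} [Semiring R] (f : R[X]) (n : ℕ) :
    (toLaurent f).coeff n = f.coeff n := by
  rw [coeff_toLaurent]
  exact Finsupp.mapDomain_apply Nat.castEmbedding.injective _ _

theorem LaurentPolynomial.coeff_T_mul {R : Type*} [Semiring R] (f : R[T;T⁻¹]) (m n : ℤ) :
    (T n * f).coeff m = f.coeff (m - n) := by
  rw [T, AddMonoidAlgebra.coeff_single_mul_apply, one_mul, neg_add_eq_sub]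

theorem LaurentPolynomial.T_one_add_T_neg_one_add_C {R : Type*} [CommRing R] (c : R) :
    (T 1 + T (-1) + C c : R[T;T⁻¹])
      = T 1 * invert (toLaurent (1 + Polynomial.C c * X + X ^ 2)) := by
  have hT : (T 1 * T (-1) : R[T;T⁻¹]) = 1 := by rw [← T_add, add_neg_cancel, T_zero]
  simp only [map_add, map_one, map_mul, map_pow, Polynomial.toLaurent_C, Polynomial.toLaurent_X,
    invert_C, invert_T]
  linear_combination (-T (-1) - C c) * hT

theorem LaurentPolynomial.coeff_sub_three_T_one_add_T_neg_one_add_C_pow {R : Type*} [CommRing R]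
    (c : R) (t : ℕ) :
    ((T 1 + T (-1) + C c : R[T;T⁻¹]) ^ t).coeff ((t : ℤ) - 3)
      = t * c * (t - 1) + t.choose 3 * c ^ 3 := by
  rw [T_one_add_T_neg_one_add_C, mul_pow, T_pow, ← map_pow, ← map_pow, coeff_T_mul, invert_apply,
    show -((t : ℤ) - 3 - t * 1) = ((3 : ℕ) : ℤ) by ring, coeff_toLaurent_natCast,
    coeff_one_add_C_mul_X_add_X_sq_pow_three]

theorem stmt_7_general (p t : ℕ) (hpodd : Odd p) (c : ZMod p) :
    ((2 : ZMod p)⁻¹ • ((T 1 + T (-1) + LaurentPolynomial.C c) ^ t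
        - (T 1 + T (-1) - LaurentPolynomial.C c) ^ t) : LaurentPolynomial (ZMod p)).coeff ((t : ℤ) - 3)
      = (t : ZMod p) * c * ((t : ZMod p) - 1) + (Nat.choose t 3 : ZMod p) * c ^ 3 := by
  have h2 : IsUnit (2 : ZMod p) := by
    exact_mod_cast (ZMod.isUnit_iff_coprime 2 p).2 (Nat.coprime_two_left.2 hpodd)
  rw [sub_eq_add_neg _ (LaurentPolynomial.C c), ← map_neg, AddMonoidAlgebra.coeff_smul_apply,
    AddMonoidAlgebra.coeff_sub, Finsupp.sub_apply, coeff_sub_three_T_one_add_T_neg_one_add_C_pow,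
    coeff_sub_three_T_one_add_T_neg_one_add_C_pow, smul_eq_mul]
  linear_combination ((t : ZMod p) * c * ((t : ZMod p) - 1) + (t.choose 3 : ZMod p) * c ^ 3) *
    ZMod.inv_mul_of_unit 2 h2

/-- For `p` an odd prime, `t` even positive, and `c ∈ F_p`, the coefficient of `x^(t-3)`
in `B(x) = (1/2)((x + x⁻¹ + c)^t - (x + x⁻¹ - c)^t)` equals `t·c·(t-1) + C(t,3)·c³`. -/
theorem stmt_7 (p t : ℕ) (hp : p.Prime) (hpodd : Odd p) (ht : 0 < t) (hte : Even t)
    (c : ZMod p) :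
    ((2 : ZMod p)⁻¹ • ((T 1 + T (-1) + LaurentPolynomial.C c) ^ t
        - (T 1 + T (-1) - LaurentPolynomial.C c) ^ t) : LaurentPolynomial (ZMod p)).coeff ((t : ℤ) - 3)
      = (t : ZMod p) * c * ((t : ZMod p) - 1) + (Nat.choose t 3 : ZMod p) * c ^ 3 :=
  stmt_7_general p t hpodd c
end

section
/- Let p be a prime with 2t ≡ 1 (mod p), and write 2t = Σ e_j p^j in base p with e_0 = 1. Suppose that for every odd i with 1 < i < 2t such that i ≢ 1 (mod n) (where n is an odd integer coprime to 2p, n ≥ 5, n dividing t-1), the binomial coefficient C(2t, i) ≡ 0 (mod p). Then 2t = 1 + p^s for some s > 0. -/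
/-!
Write `2t = 1 + p M`. By Lucas, `C(1 + p M, b + p c) ≡ C(M, c) (mod p)` for `b ∈ {0, 1}`, so
whenever `p ∤ C(M, c)` the hypothesis applied to `i = p c` (for `c` odd) or `i = 1 + p c`
(for `c` even) gives `p c ≡ 1` or `p c ≡ 0 (mod n)` respectively. If `M` is not a power of `p`,
some `0 < c < M` has `p ∤ C(M, c)`, and as `M` is odd one of `c`, `M - c` is even. An even
such `c` is not a power of `p` either, so some `0 < b < c` has `p ∤ C(c, b)`; then
`C(M, c) C(c, b) = C(M, b) C(M - b, c - b)` puts `b` and `c - b` among these indices too.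
If both are odd, `p c ≡ 1 + 1 = 2` contradicts `p c ≡ 0` since `n > 2`; if both are even,
descend to `b`.
-/

open Nat

section Lucas

variable {p : ℕ}

theorem Nat.le_of_not_dvd_choose {M c : ℕ} (h : ¬ p ∣ M.choose c) : c ≤ M := by
  by_contra! hlt
  exact h (by simp [choose_eq_zero_of_lt hlt])

theorem Nat.Prime.not_dvd_choose_of_lt (hp : p.Prime) {a b : ℕ} (ha : a < p) (hb : b ≤ a) :
    ¬ p ∣ a.choose b := fun h ↦ by
  have : p ∣ a ! := choose_mul_factorial_mul_factorial hb ▸ (h.mul_right _).mul_right _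
  exact ha.not_ge (hp.dvd_factorial.1 this)

theorem Nat.Prime.not_dvd_choose_trans (hp : p.Prime) {M c b : ℕ} (hMc : ¬ p ∣ M.choose c)
    (hcb : ¬ p ∣ c.choose b) : ¬ p ∣ M.choose b := fun hMb ↦ by
  have hprod := choose_mul (n := M) (le_of_not_dvd_choose hcb)
  exact hp.not_dvd_mul hMc hcb (hprod ▸ dvd_mul_of_dvd_left hMb _)

theorem Nat.Prime.exists_not_dvd_choose_of_ne_pow (hp : p.Prime) {M : ℕ} (hM : 0 < M)
    (hne : ∀ k, M ≠ p ^ k) : ∃ c, 0 < c ∧ c < M ∧ ¬ p ∣ M.choose c := by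
  have := Fact.mk hp
  by_contra! hall
  refine hne _ (Choose.eq_pow_multiplicity_of_choose_modEq_zero_nat hM fun i hi ↦ ?_)
  obtain ⟨hi1, hiM⟩ := Finset.mem_Icc.1 hi
  exact Nat.modEq_zero_iff_dvd.2 (hall i hi1 (by omega))

theorem Nat.Prime.not_dvd_choose_add_mul (hp : p.Prime) {a b M c : ℕ} (ha : a < p)
    (hb : b ≤ a) (h : ¬ p ∣ M.choose c) : ¬ p ∣ (a + p * M).choose (b + p * c) := by
  have := Fact.mk hp
  have hlucas := Choose.choose_modEq_choose_mod_mul_choose_div_nat (p := p)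
    (n := a + p * M) (k := b + p * c)
  simp only [add_mul_mod_self_left, add_mul_div_left _ _ hp.pos, mod_eq_of_lt ha,
    mod_eq_of_lt (hb.trans_lt ha), div_eq_of_lt ha, div_eq_of_lt (hb.trans_lt ha),
    zero_add] at hlucas
  rw [hlucas.dvd_iff dvd_rfl]
  exact hp.not_dvd_mul (hp.not_dvd_choose_of_lt ha hb) h

end Lucas

section PowerCriterion

variable {p n M : ℕ}

theorem dvd_choose_of_even (hp : p.Prime) (hpodd : Odd p) (hn : 2 < n)
    (hodd : ∀ c, Odd c → ¬ p ∣ M.choose c → p * c ≡ 1 [MOD n])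
    (heven : ∀ c, Even c → 0 < c → ¬ p ∣ M.choose c → n ∣ p * c) :
    ∀ c, Even c → 0 < c → p ∣ M.choose c := by
  intro c
  induction c using Nat.strong_induction_on with
  | _ c ih =>
  intro hc hc0
  by_contra hMc
  obtain ⟨b, hb0, hbc, hcb⟩ := hp.exists_not_dvd_choose_of_ne_pow hc0
    fun k hk ↦ Nat.not_even_iff_odd.2 (hk ▸ hpodd.pow) hc
  have hMb := hp.not_dvd_choose_trans hMc hcb
  rcases Nat.even_or_odd b with hbe | hbo
  · exact hMb (ih b hbc hbe hb0)
  have hMcb : ¬ p ∣ M.choose (c - b) :=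
    hp.not_dvd_choose_trans hMc (by rwa [choose_symm hbc.le])
  have htwo : p * c ≡ 2 [MOD n] := by
    have := (hodd b hbo hMb).add (hodd (c - b) (Nat.Even.sub_odd hbc.le hc hbo) hMcb)
    rwa [← mul_add, Nat.add_sub_cancel' hbc.le] at this
  have hzero : p * c ≡ 0 [MOD n] := Nat.modEq_zero_iff_dvd.2 (heven c hc hc0 hMc)
  have : n ∣ 2 := Nat.modEq_zero_iff_dvd.1 (htwo.symm.trans hzero)
  exact absurd (Nat.le_of_dvd two_pos this) (by omega)

theorem exists_eq_pow_of_odd (hp : p.Prime) (hpodd : Odd p) (hn : 2 < n) (hM : Odd M)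
    (hodd : ∀ c, Odd c → ¬ p ∣ M.choose c → p * c ≡ 1 [MOD n])
    (heven : ∀ c, Even c → 0 < c → ¬ p ∣ M.choose c → n ∣ p * c) :
    ∃ k, M = p ^ k := by
  by_contra! hne
  obtain ⟨c, hc0, hcM, hMc⟩ := hp.exists_not_dvd_choose_of_ne_pow hM.pos hne
  have hdvd := dvd_choose_of_even hp hpodd hn hodd heven
  rcases Nat.even_or_odd c with hce | hco
  · exact hMc (hdvd c hce hc0)
  · rw [← choose_symm hcM.le] at hMc
    exact hMc (hdvd (M - c) (Nat.Odd.sub_odd hM hco) (by omega))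

end PowerCriterion

theorem stmt_9_general (p t n : ℕ) (hp : p.Prime) (hmod : 2 * t ≡ 1 [MOD p])
    (hn5 : 5 ≤ n)
    (hbin : ∀ i : ℕ, Odd i → 1 < i → i < 2 * t → ¬ i ≡ 1 [MOD n] →
      p ∣ Nat.choose (2 * t) i) :
    ∃ s : ℕ, 0 < s ∧ 2 * t = 1 + p ^ s := by
  obtain ⟨M, hN⟩ : ∃ M, 2 * t = 1 + p * M := by
    refine ⟨2 * t / p, ?_⟩
    have := mod_add_div (2 * t) p
    rw [hmod, mod_eq_of_lt hp.one_lt] at this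
    omega
  obtain ⟨hpodd, hModd⟩ := Nat.odd_mul.1 (show Odd (p * M) by rw [Nat.odd_iff]; omega)
  have hlucas {b c : ℕ} (hb : b ≤ 1) (hgt : 1 < b + p * c) (hlt : b + p * c < 2 * t)
      (hi : Odd (b + p * c)) (hMc : ¬ p ∣ M.choose c) : b + p * c ≡ 1 [MOD n] := by
    by_contra hne
    exact hp.not_dvd_choose_add_mul hp.one_lt hb hMc (hN ▸ hbin _ hi hgt hlt hne)
  have hodd (c : ℕ) (hc : Odd c) (hMc : ¬ p ∣ M.choose c) : p * c ≡ 1 [MOD n] := by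
    have hpc : p * c ≤ p * M := Nat.mul_le_mul_left p (le_of_not_dvd_choose hMc)
    have hp_le : p ≤ p * c := Nat.le_mul_of_pos_right p hc.pos
    simpa using hlucas (b := 0) zero_le_one (by simpa using hp.one_lt.trans_le hp_le)
      (by omega) (by simpa using hpodd.mul hc) hMc
  have heven (c : ℕ) (hc : Even c) (hc0 : 0 < c) (hMc : ¬ p ∣ M.choose c) : n ∣ p * c := by
    have hcM : c < M := (le_of_not_dvd_choose hMc).lt_of_ne fun h ↦
      Nat.not_even_iff_odd.2 hModd (h ▸ hc)
    have hpc : p * c < p * M := Nat.mul_lt_mul_of_pos_left hcM hp.pos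
    have hpc0 : 0 < p * c := Nat.mul_pos hp.pos hc0
    have := hlucas le_rfl (by omega) (by omega) (hc.mul_left p).one_add hMc
    exact Nat.modEq_zero_iff_dvd.1 (Nat.ModEq.add_left_cancel' 1 this)
  obtain ⟨k, rfl⟩ := exists_eq_pow_of_odd hp hpodd (by omega) hModd hodd heven
  exact ⟨k + 1, k.succ_pos, by rw [hN, _root_.pow_succ']⟩

/-- If `p` is prime, `2t ≡ 1 (mod p)`, `n ≥ 5` is odd, coprime to `2p`, divides `t-1`, and
`C(2t, i) ≡ 0 (mod p)` for every odd `i` with `1 < i < 2t` and `i ≢ 1 (mod n)`, then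
`2t = 1 + p^s` for some `s > 0`. -/
theorem stmt_9 (p t n : ℕ) (hp : p.Prime) (hmod : 2 * t ≡ 1 [MOD p])
    (hn5 : 5 ≤ n) (hnodd : Odd n) (hnp : ¬ p ∣ n) (hnt : n ∣ t - 1)
    (hbin : ∀ i : ℕ, Odd i → 1 < i → i < 2 * t → ¬ i ≡ 1 [MOD n] →
      p ∣ Nat.choose (2 * t) i) :
    ∃ s : ℕ, 0 < s ∧ 2 * t = 1 + p ^ s :=
  stmt_9_general p t n hp hmod hn5 hbin
end

section
/- Let p be an odd prime, q = p^s, and t = (q+1)/2. Then over F_p, the polynomial F(x) = (x+2)^t - (x-2)^t equals 2·D_{(q-1)/2}(x, 1), where D_n(x,1) is the Dickson polynomial of the first kind. -/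
/-! Write `q = p ^ s = 2n + 1`. Over an algebraically closed extension every `x` is `y + y⁻¹`,
and then `y (x ± 2) = (y ± 1)²`, so `y^(n+1) ((x+2)^(n+1) - (x-2)^(n+1)) = (y+1)^(q+1) - (y-1)^(q+1)`.
Since the Frobenius `y ↦ y^q` is additive this is `(y^q+1)(y+1) - (y^q-1)(y-1) = 2y^q + 2y`,
i.e. `2 y^(n+1) (y^n + y^(-n)) = 2 y^(n+1) D_n(x, 1)`. -/

open Polynomial

theorem IsAlgClosed.exists_mul_eq_one_add_eq {K : Type*} [Field K] [IsAlgClosed K] (x : K) :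
    ∃ y z : K, y * z = 1 ∧ y + z = x := by
  have hdeg : (X ^ 2 - C x * X + 1 : K[X]).degree = 2 := by compute_degree!
  obtain ⟨y, hy⟩ := IsAlgClosed.exists_root _ (hdeg ▸ two_ne_zero)
  refine ⟨y, x - y, ?_, by ring⟩
  simp only [IsRoot, eval_add, eval_sub, eval_pow, eval_mul, eval_X, eval_C, eval_one] at hy
  linear_combination -hy

theorem add_two_pow_sub_sub_two_pow_of_mul_eq_one {R : Type*} [CommRing R] (p : ℕ) [ExpChar R p]
    {s n : ℕ} (hq : p ^ s = 2 * n + 1) {y z : R} (hyz : y * z = 1) :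
    (y + z + 2) ^ (n + 1) - (y + z - 2) ^ (n + 1) = 2 * (y ^ n + z ^ n) := by
  apply ((IsUnit.of_mul_eq_one z hyz).pow (n + 1)).mul_left_cancel
  have hplus : y * (y + z + 2) = (y + 1) ^ 2 := by linear_combination hyz
  have hminus : y * (y + z - 2) = (y - 1) ^ 2 := by linear_combination hyz
  have hyzn : (y * z) ^ n = 1 := by rw [hyz, one_pow]
  calc y ^ (n + 1) * ((y + z + 2) ^ (n + 1) - (y + z - 2) ^ (n + 1))
      = (y + 1) ^ (p ^ s + 1) - (y - 1) ^ (p ^ s + 1) := by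
        rw [mul_sub, ← mul_pow, ← mul_pow, hplus, hminus, ← pow_mul, ← pow_mul, hq]
        ring_nf
    _ = (y ^ p ^ s + 1) * (y + 1) - (y ^ p ^ s - 1) * (y - 1) := by
        rw [pow_succ, pow_succ, add_pow_expChar_pow, sub_pow_expChar_pow, one_pow]
    _ = y ^ (n + 1) * (2 * (y ^ n + z ^ n)) := by
        rw [hq]
        linear_combination (-2 * y) * hyzn

theorem X_add_two_pow_sub_X_sub_two_pow {F : Type*} [Field F] (p : ℕ) [ExpChar F p] {s n : ℕ}
    (hq : p ^ s = 2 * n + 1) :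
    (X + C 2) ^ (n + 1) - (X - C 2) ^ (n + 1) = (2 * dickson 1 1 n : F[X]) := by
  apply map_injective _ (algebraMap F (AlgebraicClosure F)).injective
  refine Polynomial.funext fun x => ?_
  obtain ⟨y, z, hyz, rfl⟩ := IsAlgClosed.exists_mul_eq_one_add_eq x
  have : ExpChar (AlgebraicClosure F) p :=
    expChar_of_injective_algebraMap (algebraMap F _).injective p
  simp only [Polynomial.map_sub, Polynomial.map_pow, Polynomial.map_add, map_X,
    Polynomial.map_mul, Polynomial.map_ofNat, map_dickson, map_one, map_ofNat, eval_sub, eval_pow,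
    eval_add, eval_X, eval_mul, eval_ofNat, dickson_one_one_eval_add_inv y z hyz]
  exact add_two_pow_sub_sub_two_pow_of_mul_eq_one p hq hyz

/-- For `p` an odd prime, `q = p^s`, `t = (q+1)/2`, over `F_p` the polynomial
`(x+2)^t - (x-2)^t` equals `2·D_{(q-1)/2}(x, 1)`. -/
theorem stmt_11 (p s : ℕ) (hp : p.Prime) (hpodd : Odd p) :
    ((Polynomial.X + Polynomial.C 2) ^ ((p ^ s + 1) / 2)
        - (Polynomial.X - Polynomial.C 2) ^ ((p ^ s + 1) / 2) : Polynomial (ZMod p))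
      = 2 * Polynomial.dickson 1 1 ((p ^ s - 1) / 2) := by
  have := Fact.mk hp
  obtain ⟨n, hn⟩ := hpodd.pow (n := s)
  rw [show (p ^ s + 1) / 2 = n + 1 by omega, show (p ^ s - 1) / 2 = n by omega]
  exact X_add_two_pow_sub_X_sub_two_pow p hn
end

section
/- Let p be a prime and a ∈ F_p nonzero. The Dickson polynomial D_n(x, a) induces a bijection on F_{p^k} for infinitely many k if and only if gcd(n, p² - 1) = 1. -/
/-!
Let `q = #K`. Every `d ∈ K` is `y + a / y` for a root `y` of `Y ^ 2 - d Y + a`, and such a sum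
lies in `K` exactly when `y ^ q ∈ {y, a / y}`; in particular `y ∈ 𝔽_{q²}`. Since
`D_n(y + a / y) = y ^ n + (a / y) ^ n`, equal values force `y' ^ n ∈ {y ^ n, (a / y) ^ n}`, and if
`gcd(n, q² - 1) = 1` then `n`-th powers are injective on `𝔽_{q²}ˣ`, so `y' ∈ {y, a / y}` and the
arguments agree. Conversely, a prime `ℓ` dividing `n` and `q² - 1` divides some `e ∈ {q + 1, q - 1}`
with `e ≥ 3`; for a suitable `y` with `y ^ e = a` (resp. `1`) and `ζ` a primitive `ℓ`-th root of
unity, `y` and `ζ y` give two different arguments `y + a / y ≠ ζ y + a / (ζ y)` in `K` with the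
same value.

Over `𝔽_p`, `p² - 1 ∣ p^{2k} - 1` gives one direction; for the other, Fermat's little theorem shows
that `n` stays coprime to `p^{2k} - 1` for all `k ≡ 1 mod n!`.
-/

open Polynomial

theorem Polynomial.dickson_one_eval_add {R : Type*} [CommRing R] (x y : R) :
    ∀ n, (dickson 1 (x * y) n).eval (x + y) = x ^ n + y ^ n
  | 0 => by norm_num [dickson_zero]
  | 1 => by simp
  | n + 2 => by
    simp only [dickson_add_two, eval_sub, eval_mul, eval_X, eval_C,
      dickson_one_eval_add x y (n + 1), dickson_one_eval_add x y n]
    ring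

theorem Polynomial.dickson_one_eval_add_div {F : Type*} [Field F] (a : F) {y : F} (hy : y ≠ 0)
    (n : ℕ) : (dickson 1 a n).eval (y + a / y) = y ^ n + (a / y) ^ n := by
  simpa only [mul_div_cancel₀ a hy] using dickson_one_eval_add y (a / y) n

theorem Polynomial.dickson_eval_map {R S : Type*} [CommRing R] [CommRing S] (f : R →+* S)
    (k : ℕ) (a x : R) (n : ℕ) : f ((dickson k a n).eval x) = (dickson k (f a) n).eval (f x) := by
  rw [← map_dickson, eval_map_apply]

theorem add_div_eq_add_div_iff {F : Type*} [Field F] {a y z : F} (hy : y ≠ 0) (hz : z ≠ 0) :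
    z + a / z = y + a / y ↔ z = y ∨ z = a / y := by
  have key : z + a / z - (y + a / y) = (z - y) * (z - a / y) / z := by
    field_simp
    ring
  rw [← sub_eq_zero, key, div_eq_zero_iff, or_iff_left hz, mul_eq_zero, sub_eq_zero, sub_eq_zero]

theorem eq_of_pow_eq_of_coprime {F : Type*} [Field F] {u v : F} {n m : ℕ}
    (hnm : n.Coprime (m - 1)) (hu0 : u ≠ 0) (hv0 : v ≠ 0) (hu : u ^ m = u) (hv : v ^ m = v)
    (h : u ^ n = v ^ n) : u = v := by
  obtain _ | m := m
  · rw [← hu, ← hv, pow_zero, pow_zero]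
  have hw : (u / v) ^ m = 1 := by
    have hw' : (u / v) ^ m * (u / v) = 1 * (u / v) := by rw [← pow_succ, div_pow, hu, hv, one_mul]
    exact mul_right_cancel₀ (div_ne_zero hu0 hv0) hw'
  have hwn : (u / v) ^ n = 1 := by rw [div_pow, h, div_self (pow_ne_zero _ hv0)]
  exact (div_eq_one_iff_eq hv0).1 ((pow_eq_one_iff_of_coprime hnm).1 ⟨hwn, hw⟩)

theorem IsAlgClosed.exists_add_div_eq {F : Type*} [Field F] [IsAlgClosed F] {a : F} (ha : a ≠ 0)
    (d : F) : ∃ y : F, y ≠ 0 ∧ y + a / y = d := by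
  obtain ⟨y, hy⟩ := IsAlgClosed.exists_root (X ^ 2 - C d * X + C a) (by
    rw [show (X ^ 2 - C d * X + C a : F[X]).degree = 2 by compute_degree!]; decide)
  simp only [IsRoot, eval_add, eval_sub, eval_mul, eval_pow, eval_X, eval_C] at hy
  have hy0 : y ≠ 0 := by rintro rfl; apply ha; simpa using hy
  refine ⟨y, hy0, ?_⟩
  field_simp
  linear_combination hy

theorem not_injective_dickson_of_mul_root_of_unity {K L : Type*} [Field K] [Field L]
    [Algebra K L] (a : K) {n : ℕ} {ζ y : L} (hζn : ζ ^ n = 1) (hζ0 : ζ ≠ 0) (hζ1 : ζ ≠ 1)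
    (hy : y ≠ 0) (hζy : ζ * y ^ 2 ≠ algebraMap K L a)
    (h₁ : y + algebraMap K L a / y ∈ (algebraMap K L).range)
    (h₂ : ζ * y + algebraMap K L a / (ζ * y) ∈ (algebraMap K L).range) :
    ¬ Function.Injective fun c : K ↦ (dickson 1 a n).eval c := by
  obtain ⟨d₁, hd₁⟩ := h₁
  obtain ⟨d₂, hd₂⟩ := h₂
  have hζy0 : ζ * y ≠ 0 := mul_ne_zero hζ0 hy
  have hne : d₂ ≠ d₁ := by
    rintro rfl
    rcases (add_div_eq_add_div_iff hy hζy0).1 (hd₂.symm.trans hd₁) with h | h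
    · exact hζ1 (mul_right_cancel₀ hy (h.trans (one_mul y).symm))
    · apply hζy
      rw [eq_div_iff hy] at h
      rw [← h]
      ring
  refine fun hinj ↦ hne (hinj ((algebraMap K L).injective ?_))
  simp only [dickson_eval_map, hd₁, hd₂, dickson_one_eval_add_div _ hy,
    dickson_one_eval_add_div _ hζy0, div_pow, mul_pow, hζn, one_mul]

theorem not_injective_dickson_of_pow_eq {K L : Type*} [Field K] [Field L] [IsAlgClosed L]
    [Algebra K L] (a : K) {n ℓ e : ℕ} (hℓ : 1 < ℓ) (hℓn : ℓ ∣ n) (hℓe : ℓ ∣ e) (he : 3 ≤ e)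
    [NeZero (e : L)] {b : L} (hb : b ≠ 0)
    (hroots : ∀ y : L, y ^ e = b → y + algebraMap K L a / y ∈ (algebraMap K L).range) :
    ¬ Function.Injective fun c : K ↦ (dickson 1 a n).eval c := by
  obtain ⟨ω, hω⟩ := HasEnoughRootsOfUnity.exists_primitiveRoot L e
  have hroot0 {y : L} (hy : y ^ e = b) : y ≠ 0 := by
    rintro rfl
    exact hb (by rw [← hy, zero_pow (by omega)])
  obtain ⟨y₀, hy₀⟩ := IsAlgClosed.exists_pow_nat_eq b (by omega : 0 < e)
  set ζ := ω ^ (e / ℓ)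
  have hζ0 : ζ ≠ 0 := pow_ne_zero _ (hω.ne_zero (by omega))
  have hζe : ζ ^ e = 1 := by rw [← pow_mul, mul_comm, pow_mul, hω.pow_eq_one, one_pow]
  have hζn : ζ ^ n = 1 := by
    obtain ⟨m, rfl⟩ := hℓn
    rw [pow_mul, ← pow_mul ω, Nat.div_mul_cancel hℓe, hω.pow_eq_one, one_pow]
  have hζ1 : ζ ≠ 1 := hω.pow_ne_one_of_pos_of_lt
    (Nat.div_pos (Nat.le_of_dvd (by omega) hℓe) (by omega)).ne' (Nat.div_lt_self (by omega) hℓ)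
  -- `ζ * y₀ ^ 2 = a = ζ * (ω * y₀) ^ 2` would force `ω ^ 2 = 1`
  obtain ⟨y, hye, hζy⟩ : ∃ y : L, y ^ e = b ∧ ζ * y ^ 2 ≠ algebraMap K L a := by
    by_cases h : ζ * y₀ ^ 2 = algebraMap K L a
    · refine ⟨ω * y₀, by rw [mul_pow, hω.pow_eq_one, one_mul, hy₀], fun h' ↦ ?_⟩
      have hy₀0 : ζ * y₀ ^ 2 ≠ 0 := mul_ne_zero hζ0 (pow_ne_zero _ (hroot0 hy₀))
      have : (ω ^ 2 - 1) * (ζ * y₀ ^ 2) = 0 := by linear_combination h' - h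
      exact hω.pow_ne_one_of_pos_of_lt two_ne_zero (by omega)
        (sub_eq_zero.1 ((mul_eq_zero.1 this).resolve_right hy₀0))
    · exact ⟨y₀, hy₀, h⟩
  exact not_injective_dickson_of_mul_root_of_unity a hζn hζ0 hζ1 (hroot0 hye) hζy (hroots y hye)
    (hroots _ (by rw [mul_pow, hζe, one_mul, hye]))

namespace FiniteField

variable {K L : Type*} [Field K] [Fintype K] [Field L] [Algebra K L]

theorem mem_range_algebraMap_of_pow_card_eq {x : L} (hx : x ^ Fintype.card K = x) :
    x ∈ (algebraMap K L).range := by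
  have hsplit : (X ^ Fintype.card K - X : K[X]).Splits := by
    rw [splits_iff_card_roots, roots_X_pow_card_sub_X,
      X_pow_card_sub_X_natDegree_eq K Fintype.one_lt_card]
    rfl
  refine hsplit.mem_range_of_isRoot (X_pow_card_sub_X_ne_zero K Fintype.one_lt_card) ?_
  simp [hx]

theorem add_div_mem_range_algebraMap_iff (a : K) {y : L} (hy : y ≠ 0) :
    y + algebraMap K L a / y ∈ (algebraMap K L).range ↔
      y ^ Fintype.card K = y ∨ y ^ Fintype.card K = algebraMap K L a / y := by
  have hφ : (y + algebraMap K L a / y) ^ Fintype.card K =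
      y ^ Fintype.card K + algebraMap K L a / y ^ Fintype.card K := by
    change frobeniusAlgHom K L _ = frobeniusAlgHom K L y + _ / frobeniusAlgHom K L y
    rw [map_add, map_div₀, AlgHom.commutes]
  rw [← add_div_eq_add_div_iff hy (pow_ne_zero _ hy)]
  constructor
  · rintro ⟨d, hd⟩
    rw [← hφ, ← hd, ← map_pow, pow_card]
  · exact fun h ↦ mem_range_algebraMap_of_pow_card_eq (hφ.trans h)

theorem pow_card_sq_eq_self_of_add_div_mem_range {a : K} (ha : a ≠ 0) {y : L} (hy : y ≠ 0)
    (h : y + algebraMap K L a / y ∈ (algebraMap K L).range) :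
    y ^ (Fintype.card K ^ 2) = y := by
  rw [sq, pow_mul]
  rcases (add_div_mem_range_algebraMap_iff a hy).1 h with h | h
  · rw [h, h]
  · rw [h, div_pow, ← map_pow, pow_card, h, div_div_cancel₀ ((map_ne_zero (algebraMap K L)).2 ha)]

theorem dickson_injective_of_coprime {a : K} (ha : a ≠ 0) {n : ℕ}
    (hn : n.Coprime (Fintype.card K ^ 2 - 1)) :
    Function.Injective fun c : K ↦ (dickson 1 a n).eval c := by
  let Ω := AlgebraicClosure K
  set A := algebraMap K Ω a
  have hA : A ≠ 0 := (map_ne_zero (algebraMap K Ω)).2 ha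
  intro d₁ d₂ hd
  obtain ⟨y₁, hy₁, hd₁⟩ := IsAlgClosed.exists_add_div_eq hA (algebraMap K Ω d₁)
  obtain ⟨y₂, hy₂, hd₂⟩ := IsAlgClosed.exists_add_div_eq hA (algebraMap K Ω d₂)
  have hpow : y₁ ^ n = y₂ ^ n ∨ y₁ ^ n = A ^ n / y₂ ^ n := by
    rw [← add_div_eq_add_div_iff (pow_ne_zero _ hy₂) (pow_ne_zero _ hy₁), ← div_pow, ← div_pow,
      ← dickson_one_eval_add_div A hy₁, ← dickson_one_eval_add_div A hy₂, hd₁, hd₂,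
      ← dickson_eval_map, ← dickson_eval_map]
    exact congrArg _ hd
  have hy₁q := pow_card_sq_eq_self_of_add_div_mem_range ha hy₁ ⟨d₁, hd₁.symm⟩
  have hy₂q := pow_card_sq_eq_self_of_add_div_mem_range ha hy₂ ⟨d₂, hd₂.symm⟩
  have hay₂q : (A / y₂) ^ (Fintype.card K ^ 2) = A / y₂ := by
    rw [div_pow, hy₂q, ← map_pow, pow_card_pow]
  have hroots : y₁ = y₂ ∨ y₁ = A / y₂ := by
    rcases hpow with h | h
    · exact .inl (eq_of_pow_eq_of_coprime hn hy₁ hy₂ hy₁q hy₂q h)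
    · exact .inr (eq_of_pow_eq_of_coprime hn hy₁ (div_ne_zero hA hy₂) hy₁q hay₂q
        (h.trans (div_pow _ _ _).symm))
  apply (algebraMap K Ω).injective
  rw [← hd₁, ← hd₂]
  exact (add_div_eq_add_div_iff hy₂ hy₁).2 hroots

theorem not_injective_dickson_of_prime_dvd {a : K} (ha : a ≠ 0) {n ℓ : ℕ} (hℓ : ℓ.Prime)
    (hℓn : ℓ ∣ n) (hℓq : ℓ ∣ Fintype.card K ^ 2 - 1) :
    ¬ Function.Injective fun c : K ↦ (dickson 1 a n).eval c := by
  let Ω := AlgebraicClosure K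
  have hq : (Fintype.card K : Ω) = 0 := by
    rw [← map_natCast (algebraMap K Ω), cast_card_eq_zero, map_zero]
  have hq1 : 1 < Fintype.card K := Fintype.one_lt_card
  by_cases hℓ_add : ℓ ∣ Fintype.card K + 1
  · have : NeZero ((Fintype.card K + 1 : ℕ) : Ω) := ⟨by simp [hq]⟩
    refine not_injective_dickson_of_pow_eq (L := Ω) a hℓ.one_lt hℓn hℓ_add (by omega)
      ((map_ne_zero (algebraMap K Ω)).2 ha) fun y hy ↦ ?_
    have hy0 : y ≠ 0 := by
      rintro rfl
      rw [zero_pow (by omega)] at hy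
      exact ha ((map_eq_zero _).1 hy.symm)
    rw [add_div_mem_range_algebraMap_iff a hy0, eq_div_iff hy0, ← pow_succ, hy]
    exact .inr rfl
  · have hℓ_sub : ℓ ∣ Fintype.card K - 1 := by
      rw [← one_pow 2, Nat.sq_sub_sq] at hℓq
      exact (hℓ.dvd_mul.1 hℓq).resolve_left hℓ_add
    have hℓ2 : ℓ ≠ 2 := by rintro rfl; omega
    have : NeZero ((Fintype.card K - 1 : ℕ) : Ω) := ⟨by simp [Nat.cast_sub hq1.le, hq]⟩
    refine not_injective_dickson_of_pow_eq (L := Ω) a hℓ.one_lt hℓn hℓ_sub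
      (le_trans (by have := hℓ.two_le; omega) (Nat.le_of_dvd (by omega) hℓ_sub)) one_ne_zero
      fun y hy ↦ ?_
    have hy0 : y ≠ 0 := by
      rintro rfl
      rw [zero_pow (by omega)] at hy
      exact zero_ne_one hy
    rw [add_div_mem_range_algebraMap_iff a hy0, ← Nat.sub_add_cancel hq1.le, pow_succ, hy,
      one_mul]
    exact .inl rfl

theorem dickson_injective_iff_coprime {a : K} (ha : a ≠ 0) (n : ℕ) :
    (Function.Injective fun c : K ↦ (dickson 1 a n).eval c) ↔
      n.Coprime (Fintype.card K ^ 2 - 1) := by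
  refine ⟨fun hinj ↦ ?_, dickson_injective_of_coprime ha⟩
  by_contra hn
  obtain ⟨ℓ, hℓ, hℓn, hℓq⟩ := Nat.Prime.not_coprime_iff_dvd.1 hn
  exact not_injective_dickson_of_prime_dvd ha hℓ hℓn hℓq hinj

end FiniteField

open Nat in
theorem Nat.Coprime.pow_mul_factorial_add_one_sub_one {n y : ℕ} (hn : n ≠ 0)
    (h : n.Coprime (y - 1)) (m : ℕ) : n.Coprime (y ^ (m * n ! + 1) - 1) := by
  refine Nat.coprime_of_dvd fun ℓ hℓ hℓn hℓy ↦ hℓ.not_dvd_one ?_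
  have : Fact ℓ.Prime := ⟨hℓ⟩
  -- Fermat's little theorem, as `ℓ - 1 ∣ n !`
  have hfermat : (y : ZMod ℓ) ^ (m * n ! + 1) = y := by
    rcases eq_or_ne (y : ZMod ℓ) 0 with h0 | h0
    · rw [h0, zero_pow (succ_ne_zero _)]
    · obtain ⟨j, hj⟩ := (Nat.dvd_factorial (Nat.sub_pos_of_lt hℓ.one_lt)
        ((Nat.sub_le ℓ 1).trans (Nat.le_of_dvd (Nat.pos_of_ne_zero hn) hℓn))).mul_left m
      rw [pow_succ, hj, pow_mul, ZMod.pow_card_sub_one_eq_one h0, one_pow, one_mul]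
  have hℓy' : ℓ ∣ y - 1 := by
    rcases Nat.eq_zero_or_pos y with rfl | hy
    · exact dvd_zero ℓ
    rw [← ZMod.natCast_eq_zero_iff, Nat.cast_sub (Nat.one_le_pow _ _ hy)] at hℓy
    rw [← ZMod.natCast_eq_zero_iff, Nat.cast_sub hy]
    push_cast at hℓy ⊢
    rwa [hfermat] at hℓy
  exact h.gcd_eq_one ▸ Nat.dvd_gcd hℓn hℓy'

theorem GaloisField.dickson_bijective_iff {p : ℕ} [Fact p.Prime] {k : ℕ} (hk : k ≠ 0)
    {a : ZMod p} (ha : a ≠ 0) (n : ℕ) :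
    Function.Bijective (fun c : GaloisField p k ↦
        ((dickson 1 a n).map (algebraMap (ZMod p) (GaloisField p k))).eval c) ↔
      n.Coprime ((p ^ k) ^ 2 - 1) := by
  let := Fintype.ofFinite (GaloisField p k)
  rw [← Finite.injective_iff_bijective, map_dickson,
    FiniteField.dickson_injective_iff_coprime
      ((map_ne_zero (algebraMap (ZMod p) (GaloisField p k))).2 ha), Fintype.card_eq_nat_card,
    GaloisField.card p k hk]

/-- Dickson's criterion: for `p` prime and `a ∈ F_p` nonzero, `D_n(x,a)` induces a
bijection on `F_{p^k}` for infinitely many `k` if and only if `gcd(n, p² - 1) = 1`. -/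
theorem stmt_12 (p n : ℕ) [Fact p.Prime] (a : ZMod p) (ha : a ≠ 0) :
    {k : ℕ | 0 < k ∧ Function.Bijective (fun c : GaloisField p k =>
        Polynomial.eval c ((Polynomial.dickson 1 a n).map
          (algebraMap (ZMod p) (GaloisField p k))))}.Infinite
      ↔ Nat.Coprime n (p ^ 2 - 1) := by
  constructor
  · intro hinf
    obtain ⟨k, hk, hbij⟩ := hinf.nonempty
    rw [GaloisField.dickson_bijective_iff hk.ne' ha, pow_right_comm] at hbij
    have hdvd : p ^ 2 - 1 ∣ (p ^ 2) ^ k - 1 := by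
      simpa only [one_pow] using Nat.sub_dvd_pow_sub_pow (p ^ 2) 1 k
    exact hbij.coprime_dvd_right hdvd
  · intro hn
    have hn0 : n ≠ 0 := by
      rintro rfl
      have := (Fact.out : p.Prime).two_le
      rw [Nat.coprime_zero_left] at hn
      have : 4 ≤ p ^ 2 := by nlinarith
      omega
    refine Set.infinite_of_injective_forall_mem (f := fun m ↦ m * n.factorial + 1)
      (fun _ _ h ↦ Nat.eq_of_mul_eq_mul_right (Nat.factorial_pos n) (Nat.succ_injective h))
      fun m ↦ ⟨Nat.succ_pos _, ?_⟩
    rw [GaloisField.dickson_bijective_iff (Nat.succ_ne_zero _) ha, pow_right_comm]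
    exact hn.pow_mul_factorial_add_one_sub_one hn0 m
end

section
/- For p = 3 and t = (3^i + 3^j)/2 with i > j ≥ 0 and i ≢ j (mod 2), the identity (x+1)^t - x^t = -D_s(x-1, 1) holds over F_3, where s = (3^i - 3^j)/2. -/
/-!
Every element of an algebraically closed field can be written as `a = u + u⁻¹ + 1`, and then `a - 1 = u + u⁻¹` turns `D_s(a - 1, 1)` into `u^s + u⁻¹^s`.
In characteristic 3 also `a + 1 = (u + 1)² / u` and `a = (u - 1)² / u`, so with `2t = 3^i + 3^j`
the Frobenius gives `(a + 1)^t - a^t = ((u^{3^i} + 1)(u^{3^j} + 1) - (u^{3^i} - 1)(u^{3^j} - 1)) / u^t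
= -(u^{3^i} + u^{3^j}) / u^t = -(u^s + u⁻¹^s)`. Two polynomials over `𝔽₃` agreeing at every point
of `\bar{𝔽₃}` are equal.
-/

open Polynomial

theorem add_one_pow_sub_sub_one_pow_three_pow {R : Type*} [CommRing R] [CharP R 3]
    (u : R) (i j : ℕ) :
    (u + 1) ^ (3 ^ i + 3 ^ j) - (u - 1) ^ (3 ^ i + 3 ^ j) = -(u ^ 3 ^ i + u ^ 3 ^ j) := by
  have h3 : (3 : R) = 0 := CharP.cast_eq_zero R 3
  rw [pow_add, pow_add, add_pow_char_pow, add_pow_char_pow, sub_pow_char_pow, sub_pow_char_pow,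
    one_pow, one_pow]
  linear_combination (u ^ 3 ^ i + u ^ 3 ^ j) * h3

theorem add_inv_add_one_add_one_pow_sub {K : Type*} [Field K] [CharP K 3] {u : K} (hu : u ≠ 0)
    {i j t s : ℕ} (ht : 2 * t = 3 ^ i + 3 ^ j) (hs : 3 ^ j + s = t) :
    (u + u⁻¹ + 1 + 1) ^ t - (u + u⁻¹ + 1) ^ t = -(u ^ s + u⁻¹ ^ s) := by
  have h3 : (3 : K) = 0 := CharP.cast_eq_zero K 3
  have hplus : u + u⁻¹ + 1 + 1 = (u + 1) ^ 2 * u⁻¹ := by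
    field_simp
    ring
  have hminus : u + u⁻¹ + 1 = (u - 1) ^ 2 * u⁻¹ := by
    field_simp
    linear_combination u * h3
  have hi : 3 ^ i = s + t := by omega
  rw [hplus, hminus, mul_pow, mul_pow, ← sub_mul, ← pow_mul, ← pow_mul, ht,
    add_one_pow_sub_sub_one_pow_three_pow, hi, ← hs, pow_add, pow_add, inv_pow, inv_pow]
  field_simp
  ring

theorem IsAlgClosed.exists_add_inv_eq {K : Type*} [Field K] [IsAlgClosed K] (b : K) :
    ∃ u : K, u ≠ 0 ∧ u + u⁻¹ = b := by
  obtain ⟨u, hroot⟩ := IsAlgClosed.exists_root (X ^ 2 - C b * X + 1 : K[X]) (by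
    rw [show (X ^ 2 - C b * X + 1 : K[X]).degree = 2 by compute_degree!]
    decide)
  simp only [IsRoot.def, eval_add, eval_sub, eval_mul, eval_pow, eval_C, eval_X, eval_one]
    at hroot
  have hu : u ≠ 0 := by
    rintro rfl
    simp at hroot
  refine ⟨u, hu, ?_⟩
  field_simp
  linear_combination hroot

theorem Nat.three_pow_add_half_sub {i j : ℕ} (hij : j ≤ i) :
    3 ^ j + (3 ^ i - 3 ^ j) / 2 = (3 ^ i + 3 ^ j) / 2 := by
  have hle : 3 ^ j ≤ 3 ^ i := Nat.pow_le_pow_right (by norm_num) hij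
  have hi : Odd (3 ^ i) := Odd.pow ⟨1, rfl⟩
  have hj : Odd (3 ^ j) := Odd.pow ⟨1, rfl⟩
  obtain ⟨a, ha⟩ := hi
  obtain ⟨b, hb⟩ := hj
  omega

theorem stmt_13_general (i j : ℕ) (hij : j < i) :
    ((Polynomial.X + 1) ^ ((3 ^ i + 3 ^ j) / 2) - Polynomial.X ^ ((3 ^ i + 3 ^ j) / 2) :
        Polynomial (ZMod 3))
      = -(Polynomial.dickson 1 1 ((3 ^ i - 3 ^ j) / 2)).comp (Polynomial.X - 1) := by
  let K := AlgebraicClosure (ZMod 3)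
  apply map_injective _ (algebraMap (ZMod 3) K).injective
  refine Polynomial.funext fun a ↦ ?_
  obtain ⟨u, hu, hua⟩ := IsAlgClosed.exists_add_inv_eq (a - 1)
  obtain rfl : a = u + u⁻¹ + 1 := by rw [hua, sub_add_cancel]
  have ht : 2 * ((3 ^ i + 3 ^ j) / 2) = 3 ^ i + 3 ^ j :=
    Nat.two_mul_div_two_of_even ((Odd.pow ⟨1, rfl⟩).add_odd (Odd.pow ⟨1, rfl⟩))
  simp only [Polynomial.map_sub, Polynomial.map_neg, Polynomial.map_pow, Polynomial.map_add,
    map_comp, map_dickson, map_X, eval_sub, eval_add, eval_neg, eval_pow, eval_X,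
    eval_one, eval_comp, add_sub_cancel_right, Polynomial.map_one, map_one,
    dickson_one_one_eval_add_inv u u⁻¹ (mul_inv_cancel₀ hu)]
  exact add_inv_add_one_add_one_pow_sub hu ht (Nat.three_pow_add_half_sub hij.le)

/-- For `p = 3` and `t = (3^i + 3^j)/2` with `i > j ≥ 0`, `i ≢ j (mod 2)`, one has
`(x+1)^t - x^t = -D_s(x-1, 1)` over `F_3`, where `s = (3^i - 3^j)/2`. -/
theorem stmt_13 (i j : ℕ) (hij : j < i) (hpar : ¬ i ≡ j [MOD 2]) :
    ((Polynomial.X + 1) ^ ((3 ^ i + 3 ^ j) / 2) - Polynomial.X ^ ((3 ^ i + 3 ^ j) / 2) :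
        Polynomial (ZMod 3))
      = -(Polynomial.dickson 1 1 ((3 ^ i - 3 ^ j) / 2)).comp (Polynomial.X - 1) :=
  stmt_13_general i j hij
end

section
/- Let t > 2 be an even integer and suppose the polynomial F(x) = ((x+1)^t + 1)/x over F_2 lies in F_2[x^m] for some odd m > 1. Then t is a power of 2. -/
/-- If every binary digit of `k` is a binary digit of `n`, then `n.choose k` is odd. -/
lemma odd_choose_of_testBit (n : ℕ) : ∀ k : ℕ,
    (∀ i, k.testBit i = true → n.testBit i = true) → Odd (n.choose k) := by
  induction n using Nat.strong_induction_on with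
  | _ n IH =>
    intro k hk
    rcases Nat.eq_zero_or_pos n with hn | hn
    · subst hn
      have hk0 : k = 0 := by
        apply Nat.eq_of_testBit_eq
        intro i
        simp only [Nat.zero_testBit]
        by_contra h
        have := hk i (by simpa using h)
        simp at this
      simp [hk0]
    · have hmod : n.choose k ≡ (n % 2).choose (k % 2) * (n / 2).choose (k / 2) [MOD 2] :=
        @Choose.choose_modEq_choose_mod_mul_choose_div_nat n k 2 ⟨Nat.prime_two⟩
      have h1 : (n % 2).choose (k % 2) = 1 := by
        rcases Nat.mod_two_eq_zero_or_one k with hk2 | hk2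
        · rcases Nat.mod_two_eq_zero_or_one n with hn2 | hn2 <;> simp [hk2, hn2]
        · have : n % 2 = 1 := by
            have := hk 0 (by simp [hk2])
            simpa using this
          simp [hk2, this]
      have h2 : Odd ((n / 2).choose (k / 2)) := by
        apply IH (n / 2) (Nat.div_lt_self hn one_lt_two)
        intro i hi
        have := hk (i + 1) (by rw [Nat.testBit_succ]; exact hi)
        rwa [Nat.testBit_succ] at this
      rw [Nat.odd_iff] at h2 ⊢
      unfold Nat.ModEq at hmod
      rw [hmod, Nat.mul_mod, h1, h2]

/-- If `t > 2` is even and `F(x) = ((x+1)^t + 1)/x` over `F_2` lies in `F_2[x^m]` for some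
odd `m > 1`, then `t` is a power of `2`. -/
theorem stmt_17 (t m : ℕ) (ht : 2 < t) (hte : Even t) (hm : 1 < m) (hmodd : Odd m)
    (F : Polynomial (ZMod 2)) (hF : Polynomial.X * F = (Polynomial.X + 1) ^ t + 1)
    (hmem : ∀ n : ℕ, ¬ m ∣ n → F.coeff n = 0) :
    ∃ e : ℕ, t = 2 ^ e := by
  by_contra hcon
  push_neg at hcon
  -- coefficients of F are binomial coefficients
  have hcoeff : ∀ n : ℕ, F.coeff n = (t.choose (n + 1) : ZMod 2) := by
    intro n
    have : (Polynomial.X * F).coeff (n + 1) = F.coeff n := Polynomial.coeff_X_mul F n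
    rw [hF] at this
    rw [← this, Polynomial.coeff_add, Polynomial.coeff_X_add_one_pow,
      Polynomial.coeff_one, if_neg (Nat.succ_ne_zero n), add_zero]
  -- if the bits of k+1 are among the bits of t, then m ∣ k
  have key : ∀ k : ℕ, (∀ i, (k + 1).testBit i = true → t.testBit i = true) → m ∣ k := by
    intro k hk
    by_contra hdvd
    have h0 := hmem k hdvd
    rw [hcoeff k] at h0
    have hodd := odd_choose_of_testBit t (k + 1) hk
    rw [Nat.odd_iff] at hodd
    rw [ZMod.natCast_eq_zero_iff] at h0
    omega
  -- t has two distinct set bits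
  have ht0 : t ≠ 0 := by omega
  obtain ⟨j, hj⟩ : ∃ j, t.testBit j = true := by
    by_contra h
    push_neg at h
    exact ht0 (Nat.eq_of_testBit_eq (fun i => by simp [h i]))
  obtain ⟨k, hkj, hkbit⟩ : ∃ k, k ≠ j ∧ t.testBit k = true := by
    by_contra h
    push_neg at h
    apply hcon j
    apply Nat.eq_of_testBit_eq
    intro i
    rw [Nat.testBit_two_pow]
    by_cases hij : i = j
    · subst hij; simp [hj]
    · have hf : t.testBit i = false := by
        cases hb : t.testBit i
        · rfl
        · exact absurd hb (h i hij)
      simp [hf, Ne.symm hij]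
  -- order them: a < b both set bits
  obtain ⟨a, b, hab, ha, hb⟩ : ∃ a b, a < b ∧ t.testBit a = true ∧ t.testBit b = true := by
    rcases lt_or_gt_of_ne hkj with h | h
    · exact ⟨k, j, h, hkbit, hj⟩
    · exact ⟨j, k, h, hj, hkbit⟩
  -- bits of 2^a + 2^b
  have hbits : ∀ i, (2 ^ a + 2 ^ b).testBit i = true → t.testBit i = true := by
    intro i hi
    rcases lt_trichotomy i b with hib | hib | hib
    · rw [add_comm, Nat.testBit_two_pow_add_gt hib, Nat.testBit_two_pow] at hi
      have : a = i := by simpa using hi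
      rwa [← this]
    · rwa [hib]
    · exfalso
      have hlt : 2 ^ a + 2 ^ b < 2 ^ i := by
        have h1 : 2 ^ a < 2 ^ b := Nat.pow_lt_pow_right one_lt_two hab
        have h2 : 2 ^ b + 2 ^ b ≤ 2 ^ i :=
          le_trans (by rw [← two_mul, ← pow_succ']; exact Nat.pow_le_pow_right (by norm_num) hib)
            le_rfl
        omega
      rw [Nat.testBit_lt_two_pow hlt] at hi
      exact absurd hi (by simp)
  -- m divides 2^a - 1 and 2^a + 2^b - 1
  have ha1 : 1 ≤ 2 ^ a := Nat.one_le_two_pow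
  have hb1 : 1 ≤ 2 ^ b := Nat.one_le_two_pow
  have hd1 : m ∣ 2 ^ a - 1 := by
    apply key
    have : 2 ^ a - 1 + 1 = 2 ^ a := by omega
    rw [this]
    intro i hi
    rw [Nat.testBit_two_pow] at hi
    have : a = i := by simpa using hi
    rwa [← this]
  have hd2 : m ∣ 2 ^ a + 2 ^ b - 1 := by
    apply key
    have : 2 ^ a + 2 ^ b - 1 + 1 = 2 ^ a + 2 ^ b := by omega
    rw [this]
    exact hbits
  have hd3 : m ∣ 2 ^ b := by
    have := Nat.dvd_sub hd2 hd1
    have heq : 2 ^ a + 2 ^ b - 1 - (2 ^ a - 1) = 2 ^ b := by omega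
    rwa [heq] at this
  -- but m is odd and > 1, contradiction
  have : m ∣ 1 := by
    have hcop : Nat.Coprime m 2 := Nat.coprime_two_right.mpr hmodd
    have := (hcop.pow_right b).eq_one_of_dvd hd3
    omega
  have := Nat.dvd_one.mp this
  omega
end

section
/- Let n ≥ 5 be an integer coprime to 6, and suppose n divides t - 1 where t > 2 is even. If every odd i with 1 ≤ i < 2t and i ≢ 1 (mod n) satisfies C(2t, i) ≡ 0 (mod 2), and additionally the Laurent polynomial F(x+x⁻¹) over F_2 (with F(x) = ((x+1)^t+1)/x) lies in F_2[x^n, x^{-n}], then the vanishing of the coefficients of x^{t-3} and x^{t-7} forces t = 6. -/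
/-! With `s = T + T⁻¹` and `G = F(s)` we have `s G = (s + 1)^t + 1` and
`s + 1 = T⁻¹ (X² + X + 1)`, so comparing coefficients at `2j - t` gives
`G_{2j-t-1} + G_{2j-t+1} = [(X² + X + 1)^t]_{2j}` when `2j ≠ t`. Over `𝔽₂` and with `t = 2u`,
the right side is `[(X² + X + 1)^u]_j = ∑ₖ C(u, k) C(k, j - k)`. Since `n ∣ t - 1` while
`n ∤ 2, 4, 6`, the coefficients `G_{-t-1}`, `G_{3-t}`, `G_{5-t}`, `G_{7-t}` vanish; for
`j = 0, 1, 2, 3` this makes `u` odd, `C(u, 2)` odd and, unless `t = 6`, `C(u, 3)` even, which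
contradicts `3 C(u, 3) = C(u, 2) (u - 2)`. -/

open LaurentPolynomial Polynomial

theorem Nat.odd_choose_three_of_odd_choose_two {u : ℕ} (hu : Odd u) (h2 : Odd (u.choose 2)) :
    Odd (u.choose 3) := by
  have hu2 : 2 ≤ u := by
    by_contra! h
    simp [Nat.choose_eq_zero_of_lt h] at h2
  have h : u.choose 3 * 3 = u.choose 2 * (u - 2) := Nat.choose_succ_right_eq u 2
  have hodd : Odd (u.choose 3 * 3) := h ▸ h2.mul (Nat.Odd.sub_even hu2 hu even_two)
  exact (Nat.odd_mul.1 hodd).1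

theorem Nat.Coprime.not_natCast_dvd_of_dvd_twelve {n : ℕ} (h6 : n.Coprime 6) (hn : 1 < n)
    {d : ℤ} (hd : d ∣ 12) : ¬ (n : ℤ) ∣ d := by
  intro h
  have h12 : n ∣ 12 := Int.natCast_dvd_natCast.1 (h.trans hd)
  have := Nat.Coprime.eq_one_of_dvd ((h6.pow_right 2).coprime_dvd_right (by norm_num)) h12
  omega

theorem Polynomial.coeff_X_sq_add_X_add_one_pow {R : Type*} [CommSemiring R] (u j : ℕ) :
    ((X ^ 2 + X + 1 : R[X]) ^ u).coeff j =
      ∑ k ∈ Finset.range (j + 1), (u.choose k * k.choose (j - k) : R) := by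
  have hterm : ∀ k, ((X * (X + 1)) ^ k * 1 ^ (u - k) * (u.choose k : R[X])).coeff j =
      if k ≤ j then (u.choose k * k.choose (j - k) : R) else 0 := by
    intro k
    rw [one_pow, mul_one, mul_pow, ← Polynomial.C_eq_natCast, coeff_mul_C, coeff_X_pow_mul',
      coeff_X_add_one_pow]
    split_ifs <;> simp [mul_comm]
  rw [show (X ^ 2 + X + 1 : R[X]) = X * (X + 1) + 1 by ring, add_pow, finsetSum_coeff]
  simp only [hterm]
  rw [Finset.sum_ite, Finset.sum_const_zero, add_zero]
  refine Finset.sum_subset (fun k hk => ?_) (fun k hk hk' => ?_)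
  · simp only [Finset.mem_filter, Finset.mem_range] at hk ⊢
    omega
  · simp only [Finset.mem_filter, Finset.mem_range, not_and] at hk hk'
    rw [Nat.choose_eq_zero_of_lt (by omega), Nat.cast_zero, zero_mul]

theorem Polynomial.coeff_one_X_sq_add_X_add_one_pow {R : Type*} [CommSemiring R] (u : ℕ) :
    ((X ^ 2 + X + 1 : R[X]) ^ u).coeff 1 = u := by
  simp [coeff_X_sq_add_X_add_one_pow, Finset.sum_range_succ]

theorem ZMod.coeff_pow_card_mul {p : ℕ} [Fact p.Prime] (f : (ZMod p)[X]) (j : ℕ) :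
    (f ^ p).coeff (j * p) = f.coeff j := by
  rw [← ZMod.expand_card, coeff_expand_mul (Fact.out : p.Prime).pos]

theorem ZMod.coeff_three_X_sq_add_X_add_one_pow_ne_zero {u : ℕ}
    (h1 : ((X ^ 2 + X + 1 : (ZMod 2)[X]) ^ u).coeff 1 = 1)
    (h2 : ((X ^ 2 + X + 1 : (ZMod 2)[X]) ^ u).coeff 2 = 0) :
    ((X ^ 2 + X + 1 : (ZMod 2)[X]) ^ u).coeff 3 ≠ 0 := by
  rw [coeff_one_X_sq_add_X_add_one_pow, ZMod.natCast_eq_one_iff_odd] at h1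
  norm_num [coeff_X_sq_add_X_add_one_pow, Finset.sum_range_succ] at h2 ⊢
  have hodd : Odd (u.choose 2) := ZMod.natCast_eq_one_iff_odd.1 <| by
    linear_combination (norm := (ring_nf; reduce_mod_char)) h2 - ZMod.natCast_eq_one_iff_odd.2 h1
  intro h3
  refine Nat.not_even_iff_odd.2 (Nat.odd_choose_three_of_odd_choose_two h1 hodd) ?_
  exact ZMod.natCast_eq_zero_iff_even.1 <| by
    linear_combination (norm := (ring_nf; reduce_mod_char)) h3

namespace LaurentPolynomial

variable {R : Type*}

lemma coeff_T_mul_s19 [Semiring R] (a z : ℤ) (f : R[T;T⁻¹]) :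
    (T a * f).coeff z = f.coeff (z - a) := by
  rw [T, AddMonoidAlgebra.coeff_single_mul_apply, one_mul, neg_add_eq_sub]

lemma coeff_toLaurent_natCast [Semiring R] (p : R[X]) (m : ℕ) :
    (toLaurent p).coeff (m : ℤ) = p.coeff m :=
  Finsupp.mapDomain_apply Nat.castEmbedding.injective p.toFinsupp.coeff m

lemma coeff_T_one_add_T_neg_one_mul [Semiring R] (G : R[T;T⁻¹]) (z : ℤ) :
    ((T 1 + T (-1)) * G).coeff z = G.coeff (z - 1) + G.coeff (z + 1) := by
  rw [add_mul, AddMonoidAlgebra.coeff_add, Finsupp.add_apply, coeff_T_mul_s19, coeff_T_mul_s19,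
    sub_neg_eq_add]

lemma T_one_add_T_neg_one_add_one [CommSemiring R] :
    (T 1 + T (-1) + 1 : R[T;T⁻¹]) = T (-1) * toLaurent (X ^ 2 + X + 1) := by
  simp only [map_add, map_pow, toLaurent_X, map_one, T_pow, mul_add, ← T_add]
  norm_num
  ring

lemma coeff_T_one_add_T_neg_one_add_one_pow [CommSemiring R] (t j : ℕ) :
    ((T 1 + T (-1) + 1 : R[T;T⁻¹]) ^ t).coeff (j - t) =
      ((X ^ 2 + X + 1 : R[X]) ^ t).coeff j := by
  rw [T_one_add_T_neg_one_add_one, mul_pow, T_pow, ← map_pow, coeff_T_mul_s19, mul_neg_one,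
    sub_neg_eq_add, sub_add_cancel, coeff_toLaurent_natCast]

lemma coeff_sub_one_add_coeff_add_one_of_mul_eq [CommSemiring R] {G : R[T;T⁻¹]} {t : ℕ}
    (hG : (T 1 + T (-1)) * G = (T 1 + T (-1) + 1) ^ t + 1) {j : ℕ} (hj : j ≠ t) :
    G.coeff (j - t - 1) + G.coeff (j - t + 1) = ((X ^ 2 + X + 1 : R[X]) ^ t).coeff j := by
  rw [← coeff_T_one_add_T_neg_one_mul, hG, AddMonoidAlgebra.coeff_add, Finsupp.add_apply,
    coeff_T_one_add_T_neg_one_add_one_pow, ← T_zero, T_apply, if_neg (by omega), add_zero]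

theorem coeff_X_sq_add_X_add_one_pow_of_mul_eq {G : (ZMod 2)[T;T⁻¹]} {t u : ℕ}
    (hG : (T 1 + T (-1)) * G = (T 1 + T (-1) + 1) ^ t + 1) (hu : t = u + u) {j : ℕ}
    (hj : 2 * j ≠ t) :
    ((X ^ 2 + X + 1 : (ZMod 2)[X]) ^ u).coeff j =
      G.coeff (1 - t + (2 * j - 2)) + G.coeff (1 - t + 2 * j) := by
  rw [← ZMod.coeff_pow_card_mul, ← pow_mul, mul_two, ← hu,
    ← coeff_sub_one_add_coeff_add_one_of_mul_eq hG (by omega)]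
  congr 2 <;> push_cast <;> ring

end LaurentPolynomial

theorem stmt_19_general (t n : ℕ) (ht : 2 < t) (hte : Even t) (hn5 : 5 ≤ n)
    (hn6 : Nat.Coprime n 6) (hnt : n ∣ t - 1)
    (F : Polynomial (ZMod 2)) (hF : Polynomial.X * F = (Polynomial.X + 1) ^ t + 1)
    (hmem : ∀ z : ℤ, ¬ (n : ℤ) ∣ z →
      (Polynomial.aeval (T 1 + T (-1) : LaurentPolynomial (ZMod 2)) F).coeff z = 0) :
    t = 6 := by
  set G := Polynomial.aeval (T 1 + T (-1) : LaurentPolynomial (ZMod 2)) F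
  have hG : (T 1 + T (-1)) * G = (T 1 + T (-1) + 1) ^ t + 1 := by
    simpa using congrArg (Polynomial.aeval (T 1 + T (-1) : LaurentPolynomial (ZMod 2))) hF
  have hdvd : (n : ℤ) ∣ 1 - t := by
    rw [← dvd_neg, neg_sub, ← Nat.cast_one, ← Nat.cast_sub (by omega)]
    exact Int.natCast_dvd_natCast.2 hnt
  have hzero : ∀ d : ℤ, d ∣ 12 → G.coeff (1 - t + d) = 0 := fun d hd => hmem _ fun h =>
    hn6.not_natCast_dvd_of_dvd_twelve (by omega) hd ((dvd_add_right hdvd).1 h)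
  obtain ⟨u, hu⟩ := hte
  have h1 : ((X ^ 2 + X + 1 : (ZMod 2)[X]) ^ u).coeff 1 = 1 := by
    have e0 := coeff_X_sq_add_X_add_one_pow_of_mul_eq hG hu (j := 0) (by omega)
    have e1 := coeff_X_sq_add_X_add_one_pow_of_mul_eq hG hu (j := 1) (by omega)
    norm_num [hzero, coeff_zero_eq_eval_zero] at e0 e1
    rw [e1, ← e0]
  obtain ⟨k, hk⟩ : Odd u := by
    rwa [coeff_one_X_sq_add_X_add_one_pow, ZMod.natCast_eq_one_iff_odd] at h1
  have h2 : ((X ^ 2 + X + 1 : (ZMod 2)[X]) ^ u).coeff 2 = 0 := by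
    simpa [hzero] using coeff_X_sq_add_X_add_one_pow_of_mul_eq hG hu (j := 2) (by omega)
  by_contra ht6
  refine ZMod.coeff_three_X_sq_add_X_add_one_pow_ne_zero h1 h2 ?_
  simpa [hzero] using coeff_X_sq_add_X_add_one_pow_of_mul_eq hG hu (j := 3) (by omega)

/-- Let `n ≥ 5` be coprime to `6`, `n ∣ t - 1`, `t > 2` even, and
`F(x) = ((x+1)^t + 1)/x` over `F_2`. If `C(2t, i) ≡ 0 (mod 2)` for every odd `i` with
`1 ≤ i < 2t` and `i ≢ 1 (mod n)`, and `F(x + x⁻¹)` lies in `F_2[x^n, x^{-n}]`, then the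
vanishing of the coefficients of `x^(t-3)` and `x^(t-7)` forces `t = 6`. -/
theorem stmt_19 (t n : ℕ) (ht : 2 < t) (hte : Even t) (hn5 : 5 ≤ n)
    (hn6 : Nat.Coprime n 6) (hnt : n ∣ t - 1)
    (F : Polynomial (ZMod 2)) (hF : Polynomial.X * F = (Polynomial.X + 1) ^ t + 1)
    (hbin : ∀ i : ℕ, Odd i → 1 ≤ i → i < 2 * t → ¬ i ≡ 1 [MOD n] →
      2 ∣ Nat.choose (2 * t) i)
    (hmem : ∀ z : ℤ, ¬ (n : ℤ) ∣ z →
      (Polynomial.aeval (T 1 + T (-1) : LaurentPolynomial (ZMod 2)) F).coeff z = 0)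
    (hv3 : (Polynomial.aeval (T 1 + T (-1) : LaurentPolynomial (ZMod 2)) F).coeff ((t : ℤ) - 3) = 0)
    (hv7 : (Polynomial.aeval (T 1 + T (-1) : LaurentPolynomial (ZMod 2)) F).coeff ((t : ℤ) - 7) = 0) :
    t = 6 :=
  stmt_19_general t n ht hte hn5 hn6 hnt F hF hmem
end
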